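/- Let F : ℝ^{n} → ℝ^{n} be C¹ with forward-complete flow E(e,t) of ė = F(e), let Φ(e,t) be the associated transition matrix, and let Q be a symmetric positive definite matrix. Fix e in ℝ^{n} and suppose there is a real number c_e > 0 with |(∂F/∂e)(E(e,t))| ≤ c_e for all t ≥ 0. Then: (i) |vᵀ Φ(e,t)^{-1}| ≤ exp(c_e t)|v| for all v in ℝ^{n} and t ≥ 0; (ii) vᵀ Φ(e,t)ᵀ Q Φ(e,t) v ≥ μ_min{Q} exp(−2 c_e t)|v|² for all v and t ≥ 0; and (iii) if additionally |Φ(e,t)| ≤ k̃ exp(−λ̃ t) for some k̃, λ̃ > 0 (so that P(e) := ∫₀^∞ Φ(e,s)ᵀ Q Φ(e,s) ds is well defined), then P(e) ≥ (μ_min{Q}/(2 c_e)) I. -/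

import Mathlib

open Real Set Filter
open scoped RealInnerProductSpace Topology

/-- Euclidean state space ℝⁿ. -/
abbrev Euc (n : ℕ) := EuclideanSpace ℝ (Fin n)

/-- Smallest eigenvalue of a symmetric operator: the infimum of its quadratic form
on the unit sphere. -/
noncomputable def muMin {n : ℕ} (A : Euc n →L[ℝ] Euc n) : ℝ :=
  sInf {r : ℝ | ∃ v : Euc n, ‖v‖ = 1 ∧ r = ⟪A v, v⟫}

/-!
Run `ẋ = A(t) x`, `A(t) = ∂F/∂e(E(e,t))`, backwards from time `t`: Grönwall's inequality with
`‖A‖ ≤ c` gives `‖v‖ ≤ exp (c t) ‖Φ(t) v‖`. Hence `Φ(t)⁻¹`, and so its adjoint, has norm at most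
`exp (c t)`, and `⟪Q Φ v, Φ v⟫ ≥ μ_min ‖Φ v‖² ≥ μ_min exp (-2 c t) ‖v‖²`. Integrating this bound
over `[0, ∞)` gives `P ≥ μ_min / (2 c)`.
-/

section muMin

variable {n : ℕ} (A : Euc n →L[ℝ] Euc n)

theorem bddBelow_muMin_set : BddBelow {r : ℝ | ∃ v : Euc n, ‖v‖ = 1 ∧ r = ⟪A v, v⟫} := by
  refine ⟨-‖A‖, ?_⟩
  rintro r ⟨v, hv, rfl⟩
  have hinner := abs_real_inner_le_norm (A v) v
  have hop := A.le_opNorm v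
  rw [hv, mul_one] at hinner hop
  linarith [neg_abs_le ⟪A v, v⟫]

theorem muMin_nonneg (hA : ∀ v, 0 ≤ ⟪A v, v⟫) : 0 ≤ muMin A :=
  Real.sInf_nonneg (by rintro r ⟨v, -, rfl⟩; exact hA v)

theorem muMin_mul_sq_norm_le_inner (u : Euc n) : muMin A * ‖u‖ ^ 2 ≤ ⟪A u, u⟫ := by
  rcases eq_or_ne u 0 with rfl | hu
  · simp
  have hnorm : ‖u‖ ≠ 0 := norm_ne_zero_iff.mpr hu
  have hunit : muMin A ≤ ⟪A (‖u‖⁻¹ • u), ‖u‖⁻¹ • u⟫ :=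
    csInf_le (bddBelow_muMin_set A) ⟨_, norm_smul_inv_norm hu, rfl⟩
  rw [map_smul, real_inner_smul_left, real_inner_smul_right, ← mul_assoc, ← sq,
    inv_pow] at hunit
  calc muMin A * ‖u‖ ^ 2 ≤ (‖u‖ ^ 2)⁻¹ * ⟪A u, u⟫ * ‖u‖ ^ 2 := by gcongr
    _ = ⟪A u, u⟫ := by field_simp

theorem muMin_mul_exp_mul_sq_norm_le_inner (hA : ∀ v, 0 ≤ ⟪A v, v⟫) {v w : Euc n} {c t : ℝ}
    (hvw : ‖v‖ ≤ exp (c * t) * ‖w‖) : muMin A * exp (-2 * c * t) * ‖v‖ ^ 2 ≤ ⟪A w, w⟫ := by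
  have hsq : exp (-2 * c * t) * ‖v‖ ^ 2 ≤ ‖w‖ ^ 2 :=
    calc exp (-2 * c * t) * ‖v‖ ^ 2 ≤ exp (-2 * c * t) * (exp (c * t) * ‖w‖) ^ 2 := by gcongr
      _ = ‖w‖ ^ 2 := by
        rw [mul_pow, ← mul_assoc, ← exp_nat_mul, ← exp_add, Nat.cast_ofNat,
          show -2 * c * t + 2 * (c * t) = 0 by ring, exp_zero, one_mul]
  calc muMin A * exp (-2 * c * t) * ‖v‖ ^ 2 = muMin A * (exp (-2 * c * t) * ‖v‖ ^ 2) := by ring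
    _ ≤ muMin A * ‖w‖ ^ 2 := by gcongr; exact muMin_nonneg A hA
    _ ≤ ⟪A w, w⟫ := muMin_mul_sq_norm_le_inner A w

end muMin

section Transition

variable {E : Type*} [NormedAddCommGroup E] [NormedSpace ℝ E] {A Φ : ℝ → E →L[ℝ] E} {c : ℝ}

theorem norm_le_exp_mul_norm_transition_apply (hΦ0 : Φ 0 = ContinuousLinearMap.id ℝ E)
    (hΦ : ∀ t, 0 ≤ t → HasDerivWithinAt Φ (A t ∘L Φ t) (Ici 0) t)
    (hA : ∀ t, 0 ≤ t → ‖A t‖ ≤ c) (v : E) {t : ℝ} (ht : 0 ≤ t) :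
    ‖v‖ ≤ exp (c * t) * ‖Φ t v‖ := by
  -- `g` runs the solution through `v` backwards from time `t`; its growth rate is at most `c`.
  set g : ℝ → E := fun s => Φ (t - s) v with hg
  have hΦcont : ContinuousOn Φ (Ici 0) := fun s hs => (hΦ s hs).continuousWithinAt
  have hcont : ContinuousOn g (Icc 0 t) :=
    (hΦcont.comp (continuousOn_const.sub continuousOn_id)
      fun s hs => sub_nonneg.mpr hs.2).clm_apply continuousOn_const
  have hderiv : ∀ s ∈ Ico 0 t, HasDerivWithinAt g (-A (t - s) (g s)) (Ici s) s := by
    intro s hs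
    have hpos : 0 < t - s := by linarith [hs.2]
    have hΦs := (hΦ _ hpos.le).hasDerivAt (Ici_mem_nhds hpos)
    have := (hΦs.clm_apply (hasDerivAt_const (t - s) v)).scomp s
      ((hasDerivAt_id s).const_sub t)
    simpa [hg, Function.comp_def] using this.hasDerivWithinAt
  have hbound : ∀ s ∈ Ico 0 t, ‖-A (t - s) (g s)‖ ≤ c * ‖g s‖ + 0 := by
    intro s hs
    rw [norm_neg, add_zero]
    exact (A (t - s)).le_of_opNorm_le (hA _ (by linarith [hs.2])) (g s)
  have := norm_le_gronwallBound_of_norm_deriv_right_le hcont hderiv le_rfl hbound t ⟨ht, le_rfl⟩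
  simpa [hg, hΦ0, gronwallBound_ε0, mul_comm] using this

theorem opNorm_le_of_comp_eq_id {L R : E →L[ℝ] E} {K : ℝ} (hK : 0 ≤ K)
    (hL : ∀ v, ‖v‖ ≤ K * ‖L v‖) (hLR : L ∘L R = ContinuousLinearMap.id ℝ E) : ‖R‖ ≤ K :=
  R.opNorm_le_bound hK fun w => by
    simpa [← ContinuousLinearMap.comp_apply, hLR] using hL (R w)

end Transition

theorem tendsto_intervalIntegral_exp_mul_atTop {a : ℝ} (ha : a < 0) :
    Tendsto (fun T => ∫ s in (0 : ℝ)..T, exp (a * s)) atTop (𝓝 (-1 / a)) := by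
  simpa [integral_exp_mul_Ioi ha] using
    MeasureTheory.intervalIntegral_tendsto_integral_Ioi 0 (integrableOn_exp_mul_Ioi ha 0) tendsto_id

section InnerProductSpace

variable {E : Type*} [NormedAddCommGroup E] [InnerProductSpace ℝ E] [CompleteSpace E]

theorem norm_adjoint_apply_le_of_comp_eq_id {L R : E →L[ℝ] E} {K : ℝ} (hK : 0 ≤ K)
    (hL : ∀ v, ‖v‖ ≤ K * ‖L v‖) (hLR : L ∘L R = ContinuousLinearMap.id ℝ E) (v : E) :
    ‖ContinuousLinearMap.adjoint R v‖ ≤ K * ‖v‖ :=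
  (ContinuousLinearMap.adjoint R).le_of_opNorm_le
    (by rw [LinearIsometryEquiv.norm_map]; exact opNorm_le_of_comp_eq_id hK hL hLR) v

theorem inner_intervalIntegral_apply {B : ℝ → E →L[ℝ] E} {a b : ℝ}
    (hB : IntervalIntegrable B MeasureTheory.volume a b) (v w : E) :
    ⟪(∫ s in a..b, B s) v, w⟫ = ∫ s in a..b, ⟪B s v, w⟫ := by
  have := ((innerSL ℝ w).comp (ContinuousLinearMap.apply ℝ E v)).intervalIntegral_comp_comm hB
  simpa [real_inner_comm w] using this.symm

theorem le_inner_of_tendsto_intervalIntegral {B : ℝ → E →L[ℝ] E} {P : E →L[ℝ] E}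
    {g : ℝ → ℝ} {I : ℝ} (v : E) (hB : ContinuousOn B (Ici 0))
    (hP : Tendsto (fun T => ∫ s in (0 : ℝ)..T, B s) atTop (𝓝 P)) (hg : Continuous g)
    (hgI : Tendsto (fun T => ∫ s in (0 : ℝ)..T, g s) atTop (𝓝 I))
    (hle : ∀ s, 0 ≤ s → g s ≤ ⟪B s v, v⟫) : I ≤ ⟪P v, v⟫ := by
  have hPv : Tendsto (fun T => ⟪(∫ s in (0 : ℝ)..T, B s) v, v⟫) atTop (𝓝 ⟪P v, v⟫) :=
    ((((ContinuousLinearMap.apply ℝ E v).continuous.tendsto P).comp hP).inner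
      tendsto_const_nhds)
  refine le_of_tendsto_of_tendsto hgI hPv ?_
  filter_upwards [eventually_ge_atTop 0] with T hT
  have hIcc : Icc 0 T ⊆ Ici 0 := Icc_subset_Ici_self
  rw [inner_intervalIntegral_apply ((hB.mono hIcc).intervalIntegrable_of_Icc hT)]
  refine intervalIntegral.integral_mono_on hT (hg.intervalIntegrable 0 T) ?_
    fun s hs => hle s hs.1
  exact (((hB.clm_apply continuousOn_const).inner continuousOn_const).mono
    hIcc).intervalIntegrable_of_Icc hT

end InnerProductSpace

theorem lower_bound_P_general
    {n : ℕ}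
    (F : Euc n → Euc n)
    (Efl : Euc n → ℝ → Euc n)
    (Φ : Euc n → ℝ → Euc n →L[ℝ] Euc n)
    (hΦ0 : ∀ e, Φ e 0 = ContinuousLinearMap.id ℝ (Euc n))
    (hΦ : ∀ e t, 0 ≤ t →
      HasDerivWithinAt (Φ e) ((fderiv ℝ F (Efl e t)) ∘L Φ e t) (Ici 0) t)
    (Q : Euc n →L[ℝ] Euc n)
    (hQpos : ∀ v, v ≠ 0 → 0 < ⟪Q v, v⟫)
    -- fix e, with a bound c_e on the Jacobian along the solution through e
    (e : Euc n) (ce : ℝ) (hce : 0 < ce)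
    (hbnd : ∀ t, 0 ≤ t → ‖fderiv ℝ F (Efl e t)‖ ≤ ce)
    -- the inverse of the transition matrix
    (Φinv : ℝ → Euc n →L[ℝ] Euc n)
    (hΦinv : ∀ t, 0 ≤ t →
      Φinv t ∘L Φ e t = ContinuousLinearMap.id ℝ (Euc n) ∧
      Φ e t ∘L Φinv t = ContinuousLinearMap.id ℝ (Euc n)) :
    -- (i)
    (∀ (v : Euc n) (t : ℝ), 0 ≤ t →
      ‖ContinuousLinearMap.adjoint (Φinv t) v‖ ≤ exp (ce * t) * ‖v‖) ∧
    -- (ii)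
    (∀ (v : Euc n) (t : ℝ), 0 ≤ t →
      muMin Q * exp (-2 * ce * t) * ‖v‖ ^ 2 ≤ ⟪Q (Φ e t v), Φ e t v⟫) ∧
    -- (iii)
    (∀ ktl lamtl : ℝ, 0 < ktl → 0 < lamtl →
      (∀ t, 0 ≤ t → ‖Φ e t‖ ≤ ktl * exp (-lamtl * t)) →
      ∀ P : Euc n →L[ℝ] Euc n,
        Tendsto (fun T => ∫ s in (0:ℝ)..T,
            ContinuousLinearMap.adjoint (Φ e s) ∘L Q ∘L Φ e s) atTop (𝓝 P) →
        ∀ v : Euc n, muMin Q / (2 * ce) * ‖v‖ ^ 2 ≤ ⟪P v, v⟫) := by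
  have hgrowth (v : Euc n) {t : ℝ} (ht : 0 ≤ t) : ‖v‖ ≤ exp (ce * t) * ‖Φ e t v‖ :=
    norm_le_exp_mul_norm_transition_apply (hΦ0 e) (hΦ e) hbnd v ht
  have hQ : ∀ v, 0 ≤ ⟪Q v, v⟫ := fun v => by
    rcases eq_or_ne v 0 with rfl | hv
    · simp
    · exact (hQpos v hv).le
  have hlower (v : Euc n) (t : ℝ) (ht : 0 ≤ t) :
      muMin Q * exp (-2 * ce * t) * ‖v‖ ^ 2 ≤ ⟪Q (Φ e t v), Φ e t v⟫ :=
    muMin_mul_exp_mul_sq_norm_le_inner Q hQ (hgrowth v ht)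
  refine ⟨fun v t ht => ?_, hlower, fun ktl lamtl _ _ _ P hP v => ?_⟩
  · exact norm_adjoint_apply_le_of_comp_eq_id (exp_pos _).le (hgrowth · ht) (hΦinv t ht).2 v
  · have hΦc : ContinuousOn (Φ e) (Ici 0) := fun t ht => (hΦ e t ht).continuousWithinAt
    have hB : ContinuousOn (fun s => ContinuousLinearMap.adjoint (Φ e s) ∘L Q ∘L Φ e s) (Ici 0) :=
      (ContinuousLinearMap.adjoint.continuous.comp_continuousOn hΦc).clm_comp
      (continuousOn_const (c := Q) |>.clm_comp hΦc)
    refine le_inner_of_tendsto_intervalIntegral v hB hP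
      (g := fun s => muMin Q * ‖v‖ ^ 2 * exp (-2 * ce * s)) (by fun_prop) ?_ fun s hs => ?_
    · simp_rw [intervalIntegral.integral_const_mul]
      convert (tendsto_intervalIntegral_exp_mul_atTop (by linarith : -2 * ce < 0)).const_mul
        (muMin Q * ‖v‖ ^ 2) using 2
      field_simp
    · rw [ContinuousLinearMap.comp_apply, ContinuousLinearMap.comp_apply,
        ContinuousLinearMap.adjoint_inner_left]
      linarith [hlower v s hs]

/-- Lower bound on P(e) = ∫₀^∞ Φ(e,s)ᵀ Q Φ(e,s) ds: fix e and suppose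
|∂F/∂e(E(e,t))| ≤ c_e for all t ≥ 0.  Then
(i) |vᵀ Φ(e,t)⁻¹| ≤ exp(c_e t)|v|,
(ii) vᵀ Φ(e,t)ᵀ Q Φ(e,t) v ≥ μ_min{Q} exp(−2c_e t)|v|², and
(iii) if additionally |Φ(e,t)| ≤ k̃ exp(−λ̃ t), then P(e) ≥ (μ_min{Q}/(2c_e)) I. -/
theorem lower_bound_P
    {n : ℕ}
    (F : Euc n → Euc n) (hF : ContDiff ℝ 1 F)
    (Efl : Euc n → ℝ → Euc n)
    (hinit : ∀ e, Efl e 0 = e)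
    (hflow : ∀ e t, 0 ≤ t → HasDerivWithinAt (Efl e) (F (Efl e t)) (Ici 0) t)
    (Φ : Euc n → ℝ → Euc n →L[ℝ] Euc n)
    (hΦ0 : ∀ e, Φ e 0 = ContinuousLinearMap.id ℝ (Euc n))
    (hΦ : ∀ e t, 0 ≤ t →
      HasDerivWithinAt (Φ e) ((fderiv ℝ F (Efl e t)) ∘L Φ e t) (Ici 0) t)
    (Q : Euc n →L[ℝ] Euc n) (hQsa : IsSelfAdjoint Q)
    (hQpos : ∀ v, v ≠ 0 → 0 < ⟪Q v, v⟫)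
    -- fix e, with a bound c_e on the Jacobian along the solution through e
    (e : Euc n) (ce : ℝ) (hce : 0 < ce)
    (hbnd : ∀ t, 0 ≤ t → ‖fderiv ℝ F (Efl e t)‖ ≤ ce)
    -- the inverse of the transition matrix
    (Φinv : ℝ → Euc n →L[ℝ] Euc n)
    (hΦinv : ∀ t, 0 ≤ t →
      Φinv t ∘L Φ e t = ContinuousLinearMap.id ℝ (Euc n) ∧
      Φ e t ∘L Φinv t = ContinuousLinearMap.id ℝ (Euc n)) :
    -- (i)
    (∀ (v : Euc n) (t : ℝ), 0 ≤ t →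
      ‖ContinuousLinearMap.adjoint (Φinv t) v‖ ≤ exp (ce * t) * ‖v‖) ∧
    -- (ii)
    (∀ (v : Euc n) (t : ℝ), 0 ≤ t →
      muMin Q * exp (-2 * ce * t) * ‖v‖ ^ 2 ≤ ⟪Q (Φ e t v), Φ e t v⟫) ∧
    -- (iii)
    (∀ ktl lamtl : ℝ, 0 < ktl → 0 < lamtl →
      (∀ t, 0 ≤ t → ‖Φ e t‖ ≤ ktl * exp (-lamtl * t)) →
      ∀ P : Euc n →L[ℝ] Euc n,
        Tendsto (fun T => ∫ s in (0:ℝ)..T,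
            ContinuousLinearMap.adjoint (Φ e s) ∘L Q ∘L Φ e s) atTop (𝓝 P) →
        ∀ v : Euc n, muMin Q / (2 * ce) * ‖v‖ ^ 2 ≤ ⟪P v, v⟫) :=
  lower_bound_P_general F Efl Φ hΦ0 hΦ Q hQpos e ce hce hbnd Φinv hΦinv
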